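/- Let f be a λ-eigenfunction of F_q^n with λ = (q−1)n−qh, and let I ⊆ {1,...,n} with |I| = k where n−h < k ≤ h. Then for every vertex α and every j with 0 ≤ j ≤ n−k, the components satisfy the linear system Σ_{i=0}^{j} (q−1)^{j−i} C(h+k−n, j−i) v_i^{Ī,f}(α) = Σ_{i=0}^{j} (−1)^i P_{j−i}^{(q−1)}(h−k; h−i) v_i^{I,f}(α). -/

import Mathlib

/-!
Let `S` be the set of coordinates on which a character `ψ` of `(Fin q)ⁿ` is nontrivial. Then `ψ`
is an eigenfunction of the Hamming graph with eigenvalue `(q-1)n - q|S|`, so an eigenfunction with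
eigenvalue `(q-1)n - qh` is a combination of characters with `|S| = h`. For a character, the
generating polynomial `W_J(y, z) = ∑ᵢ vᵢ^{J} yⁱ z^{|J|-i}` of the local distribution on a face
factors over the coordinates of `J` as `ψ(α) (z - y)^{|J ∩ S|} (z + (q-1)y)^{|J \ S|}`.
The two sides of the system are the `Xʲ`-coefficients of `(1 + (q-1)X)^{h+k-n} W_Ī(X, 1)` and
`(1 - X)^{h-k} W_I(-X, 1 + (q-2)X)`. The substitution `y = -X`, `z = 1 + (q-2)X` swaps the two
factors, and when `|S| = h` both polynomials equal `ψ(α) (1 - X)^{h-t} (1 + (q-1)X)^t` with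
`t = |I ∩ S|`.
-/

/-- The q-ary Krawtchouk polynomial value P_i^{(q)}(t;N). -/
def kraw (q i t N : ℕ) : ℤ :=
  ∑ j ∈ Finset.range (i+1),
    (-1:ℤ)^j * ((q:ℤ)-1)^(i-j) * (t.choose j : ℤ) * ((N-t).choose (i-j) : ℤ)

/-- Local distribution component v_j^{I,f}(α): sum of f over the face Γ^I(α)
intersected with the sphere of radius j around α. -/
noncomputable def locdist {q n : ℕ} (f : (Fin n → Fin q) → ℂ) (α : Fin n → Fin q)
    (I : Finset (Fin n)) (j : ℕ) : ℂ :=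
  ∑ β ∈ Finset.univ.filter
      (fun β : Fin n → Fin q => (∀ i ∈ Iᶜ, β i = α i) ∧ hammingDist α β = j), f β

open Finset Polynomial

lemma coeff_one_add_C_mul_X_pow {R : Type*} [CommRing R] (a : R) (M m : ℕ) :
    ((1 + C a * X) ^ M).coeff m = a ^ m * M.choose m := by
  have hterm (x : ℕ) : (C a * X) ^ x * 1 ^ (M - x) * (M.choose x : R[X]) =
      C (a ^ x * M.choose x) * X ^ x := by
    simp only [one_pow, mul_one, mul_pow, C_mul, C_pow, map_natCast]; ring
  simp only [add_comm (1 : R[X]), add_pow, hterm, finsetSum_coeff, coeff_C_mul_X_pow,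
    sum_ite_eq, mem_range]
  split_ifs with hm
  · rfl
  · simp [Nat.choose_eq_zero_of_lt (by omega : M < m)]

lemma kraw_eq_coeff {R : Type*} [CommRing R] (Q i t N : ℕ) :
    (kraw Q i t N : R) = ((1 - X) ^ t * (1 + C ((Q : R) - 1) * X) ^ (N - t)).coeff i := by
  rw [show (1 - X : R[X]) = 1 + C (-1) * X by simp [sub_eq_add_neg], coeff_mul,
    Nat.sum_antidiagonal_eq_sum_range_succ_mk, kraw]
  push_cast
  refine sum_congr rfl fun j _ => ?_
  rw [coeff_one_add_C_mul_X_pow, coeff_one_add_C_mul_X_pow]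
  ring

namespace AddChar

variable {ι G : Type*} [DecidableEq ι]

def coord {M : Type*} [AddCommMonoid G] [Monoid M] (ψ : AddChar (ι → G) M) (i : ι) :
    AddChar G M :=
  ψ.compAddMonoidHom (AddMonoidHom.single (fun _ => G) i)

lemma prod_coord_apply {M : Type*} [Fintype ι] [AddCommMonoid G] [CommMonoid M]
    (ψ : AddChar (ι → G) M) (x : ι → G) : ∏ i, ψ.coord i (x i) = ψ x := by
  have key (s : Finset ι) : ψ (∑ i ∈ s, Pi.single i (x i)) = ∏ i ∈ s, ψ.coord i (x i) := by
    induction s using Finset.induction_on with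
    | empty => simp
    | insert a s ha ih => rw [sum_insert ha, map_add_eq_mul, prod_insert ha, ih]; rfl
  rw [← key, univ_sum_single]

noncomputable def coordSupport {M : Type*} [Finite ι] [AddCommMonoid G] [Monoid M]
    (ψ : AddChar (ι → G) M) : Finset ι :=
  (Set.toFinite {i | ψ.coord i ≠ 0}).toFinset

lemma mem_coordSupport {M : Type*} [Finite ι] [AddCommMonoid G] [Monoid M]
    {ψ : AddChar (ι → G) M} {i : ι} : i ∈ ψ.coordSupport ↔ ψ.coord i ≠ 0 := by
  simp [coordSupport]

variable {A : Type*} [CommRing A] [Algebra ℂ A]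

open scoped Classical in
lemma sum_algebraMap_mul_ite_eq [AddCommGroup G] [Fintype G] [DecidableEq G]
    (φ : AddChar G ℂ) (a : G) (y z : A) :
    ∑ c, algebraMap ℂ A (φ c) * (if c = a then z else y) =
      algebraMap ℂ A (φ a) *
        (if φ = 0 then z + algebraMap ℂ A (Fintype.card G - 1) * y else z - y) := by
  have hsplit : ∀ c, algebraMap ℂ A (φ c) * (if c = a then z else y) =
      algebraMap ℂ A (φ c) * y + if c = a then algebraMap ℂ A (φ c) * (z - y) else 0 := by
    intro c; split_ifs <;> ring
  rw [sum_congr rfl fun c _ => hsplit c, sum_add_distrib, sum_ite_eq', if_pos (mem_univ a),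
    ← sum_mul, ← map_sum, sum_eq_ite]
  split_ifs with hφ
  · simp only [hφ, zero_apply, map_one, map_sub, map_natCast]; ring
  · simp

end AddChar

variable {q n : ℕ}

def face (α : Fin n → Fin q) (J : Finset (Fin n)) : Finset (Fin n → Fin q) :=
  univ.filter fun β => ∀ m ∈ Jᶜ, β m = α m

lemma locdist_eq_sum_face (f : (Fin n → Fin q) → ℂ) (α : Fin n → Fin q) (J : Finset (Fin n))
    (i : ℕ) : locdist f α J i = ∑ β ∈ face α J with hammingDist α β = i, f β := by
  rw [locdist, face, filter_filter]

lemma face_eq_piFinset (α : Fin n → Fin q) (J : Finset (Fin n)) :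
    face α J = Fintype.piFinset fun m => if m ∈ J then univ else {α m} := by
  ext β
  simp only [face, mem_filter, mem_univ, true_and, mem_compl, Fintype.mem_piFinset]
  refine forall_congr' fun m => ?_
  split_ifs <;> simp [*]

lemma hammingDist_eq_card_filter_of_mem_face {α β : Fin n → Fin q} {J : Finset (Fin n)}
    (hβ : β ∈ face α J) : hammingDist α β = #{m ∈ J | β m ≠ α m} := by
  simp only [face, mem_filter, mem_univ, true_and, mem_compl] at hβ
  rw [hammingDist]
  congr 1
  ext m
  simp only [mem_filter, mem_univ, true_and, ne_comm (a := α m)]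
  exact ⟨fun h => ⟨by_contra fun hm => h (hβ m hm), h⟩, And.right⟩

lemma locdist_eq_zero_of_card_lt (f : (Fin n → Fin q) → ℂ) (α : Fin n → Fin q)
    {J : Finset (Fin n)} {i : ℕ} (hi : #J < i) : locdist f α J i = 0 := by
  rw [locdist_eq_sum_face]
  refine sum_eq_zero fun β hβ => absurd hi (not_lt.2 ?_)
  rw [mem_filter] at hβ
  rw [← hβ.2, hammingDist_eq_card_filter_of_mem_face hβ.1]
  exact card_filter_le _ _

lemma prod_ite_eq_of_mem_face {M : Type*} [CommMonoid M] {α β : Fin n → Fin q}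
    {J : Finset (Fin n)} (hβ : β ∈ face α J) (y z : M) : ∏ m ∈ J, (if β m = α m then z else y) =
      y ^ hammingDist α β * z ^ (#J - hammingDist α β) := by
  rw [prod_ite, prod_const, prod_const, hammingDist_eq_card_filter_of_mem_face hβ, mul_comm,
    ← card_filter_add_card_filter_not (s := J) (fun m => β m = α m), Nat.add_sub_cancel]

section Enumerator

variable {A : Type*} [CommRing A] [Algebra ℂ A]

noncomputable def locdistEnum (f : (Fin n → Fin q) → ℂ) (α : Fin n → Fin q)
    (J : Finset (Fin n)) (y z : A) : A :=
  ∑ i ∈ range (#J + 1), algebraMap ℂ A (locdist f α J i) * y ^ i * z ^ (#J - i)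

lemma locdistEnum_eq_sum_face (f : (Fin n → Fin q) → ℂ) (α : Fin n → Fin q)
    (J : Finset (Fin n)) (y z : A) :
    locdistEnum f α J y z =
      ∑ β ∈ face α J, algebraMap ℂ A (f β) * ∏ m ∈ J, if β m = α m then z else y := by
  have hmaps : ∀ β ∈ face α J, hammingDist α β ∈ range (#J + 1) := fun β hβ => by
    rw [mem_range, Nat.lt_succ_iff, hammingDist_eq_card_filter_of_mem_face hβ]
    exact card_filter_le _ _
  rw [locdistEnum, ← sum_fiberwise_of_maps_to hmaps]
  refine sum_congr rfl fun i _ => ?_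
  rw [locdist_eq_sum_face, map_sum, sum_mul, sum_mul]
  refine sum_congr rfl fun β hβ => ?_
  rw [mem_filter] at hβ
  rw [prod_ite_eq_of_mem_face hβ.1, hβ.2, mul_assoc]

lemma locdistEnum_sum_smul {ι : Type*} (s : Finset ι) (c : ι → ℂ)
    (g : ι → (Fin n → Fin q) → ℂ) (α : Fin n → Fin q) (J : Finset (Fin n)) (y z : A) :
    locdistEnum (∑ ψ ∈ s, c ψ • g ψ) α J y z =
      ∑ ψ ∈ s, algebraMap ℂ A (c ψ) * locdistEnum (g ψ) α J y z := by
  simp only [locdistEnum_eq_sum_face, Finset.sum_apply, Pi.smul_apply, smul_eq_mul, map_sum,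
    map_mul, sum_mul, mul_sum, mul_assoc]
  exact sum_comm

end Enumerator

lemma coeff_locdistEnum_X_one (f : (Fin n → Fin q) → ℂ) (α : Fin n → Fin q)
    (J : Finset (Fin n)) (i : ℕ) : (locdistEnum f α J (X : ℂ[X]) 1).coeff i = locdist f α J i := by
  simp only [locdistEnum, one_pow, mul_one, algebraMap_eq, finsetSum_coeff, coeff_C_mul_X_pow,
    sum_ite_eq, mem_range]
  split_ifs with hi
  · rfl
  · exact (locdist_eq_zero_of_card_lt f α (by omega)).symm

lemma sum_pow_mul_choose_mul_locdist_eq_coeff (a : ℂ) (M j : ℕ) (f : (Fin n → Fin q) → ℂ)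
    (α : Fin n → Fin q) (J : Finset (Fin n)) :
    ∑ i ∈ range (j + 1), a ^ (j - i) * ((M.choose (j - i) : ℕ) : ℂ) * locdist f α J i =
      ((1 + C a * X) ^ M * locdistEnum f α J X 1).coeff j := by
  rw [mul_comm, coeff_mul, Nat.sum_antidiagonal_eq_sum_range_succ_mk]
  refine sum_congr rfl fun i _ => ?_
  rw [coeff_locdistEnum_X_one, coeff_one_add_C_mul_X_pow]
  ring

lemma sum_kraw_mul_locdist_eq_coeff (Q : ℕ) {h k : ℕ} (hkh : k ≤ h) {J : Finset (Fin n)}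
    (hJ : #J = k) (f : (Fin n → Fin q) → ℂ) (α : Fin n → Fin q) (j : ℕ) :
    ∑ i ∈ range (j + 1), (-1 : ℂ) ^ i * (kraw Q (j - i) (h - k) (h - i) : ℂ) * locdist f α J i =
      ((1 - X) ^ (h - k) * locdistEnum f α J (-X) (1 + C ((Q : ℂ) - 1) * X)).coeff j := by
  have hterm : ∀ i ∈ range (k + 1),
      ((1 - X) ^ (h - k) * (algebraMap ℂ ℂ[X] (locdist f α J i) * (-X) ^ i *
        (1 + C ((Q : ℂ) - 1) * X) ^ (k - i))).coeff j =
      if i ≤ j then (-1 : ℂ) ^ i * (kraw Q (j - i) (h - k) (h - i) : ℂ) * locdist f α J i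
      else 0 := by
    intro i hi
    have hexp : h - i - (h - k) = k - i := by rw [mem_range] at hi; omega
    have hneg : (-X : ℂ[X]) ^ i = C ((-1) ^ i) * X ^ i := by
      rw [neg_pow, map_pow, map_neg, map_one]
    rw [algebraMap_eq, hneg, kraw_eq_coeff, hexp,
      show ∀ p r s : ℂ[X], ∀ u v : ℂ, p * (C u * (C v * r) * s) = C (v * u) * (r * (p * s)) by
        intros; simp only [C_mul]; ring,
      coeff_C_mul, coeff_X_pow_mul']
    split_ifs <;> ring
  rw [locdistEnum, hJ, mul_sum, finsetSum_coeff, sum_congr rfl hterm, ← sum_filter]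
  refine (sum_subset (fun i => by simp only [mem_filter, mem_range]; omega) fun i hi hi' => ?_).symm
  simp only [mem_filter, mem_range, not_and, not_le] at hi hi'
  rw [locdist_eq_zero_of_card_lt f α (by omega), mul_zero]

section Characters

variable [NeZero q] {A : Type*} [CommRing A] [Algebra ℂ A]

lemma locdistEnum_addChar (ψ : AddChar (Fin n → Fin q) ℂ) (α : Fin n → Fin q)
    (J : Finset (Fin n)) (y z : A) :
    locdistEnum ψ α J y z = algebraMap ℂ A (ψ α) * (z - y) ^ #(J ∩ ψ.coordSupport) *
      (z + algebraMap ℂ A (q - 1) * y) ^ #(J \ ψ.coordSupport) := by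
  set S := ψ.coordSupport
  have hcoord (m : Fin n) :
      ∑ c ∈ (if m ∈ J then univ else {α m}), algebraMap ℂ A (ψ.coord m c) *
          (if m ∈ J then (if c = α m then z else y) else 1) =
        algebraMap ℂ A (ψ.coord m (α m)) *
          (if m ∈ J then (if m ∈ S then z - y else z + algebraMap ℂ A (q - 1) * y) else 1) := by
    by_cases hmJ : m ∈ J
    · simp only [hmJ, if_true, AddChar.sum_algebraMap_mul_ite_eq, Fintype.card_fin,
        S, AddChar.mem_coordSupport, ite_not]
    · simp [hmJ]
  calc locdistEnum ψ α J y z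
      = ∑ β ∈ Fintype.piFinset (fun m => if m ∈ J then univ else {α m}),
          ∏ m, algebraMap ℂ A (ψ.coord m (β m)) *
            (if m ∈ J then (if β m = α m then z else y) else 1) := by
        rw [locdistEnum_eq_sum_face, face_eq_piFinset]
        refine sum_congr rfl fun β _ => ?_
        rw [prod_mul_distrib, ← map_prod, AddChar.prod_coord_apply, prod_ite_mem, univ_inter]
    _ = ∏ m, algebraMap ℂ A (ψ.coord m (α m)) *
          (if m ∈ J then (if m ∈ S then z - y else z + algebraMap ℂ A (q - 1) * y) else 1) := by
        rw [← prod_congr rfl fun m _ => hcoord m, prod_univ_sum]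
    _ = _ := by
        rw [prod_mul_distrib, ← map_prod, AddChar.prod_coord_apply, prod_ite_mem, univ_inter,
          prod_ite, prod_const, prod_const, filter_mem_eq_inter, filter_notMem_eq_sdiff, mul_assoc]

lemma sum_sphere_one_addChar (ψ : AddChar (Fin n → Fin q) ℂ) (x : Fin n → Fin q) :
    ∑ β ∈ univ.filter (fun β => hammingDist x β = 1), ψ β =
      (((q : ℂ) - 1) * n - q * #ψ.coordSupport) * ψ x := by
  -- The sphere of radius 1 is the `X¹`-coefficient of the enumerator of the whole space.
  have hw : #ψ.coordSupport ≤ n := card_le_univ _ |>.trans_eq (Fintype.card_fin n)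
  have hsphere : univ.filter (fun β => hammingDist x β = 1) =
      univ.filter (fun β : Fin n → Fin q => (∀ m ∈ (univ : Finset (Fin n))ᶜ, β m = x m) ∧
        hammingDist x β = 1) := by
    simp
  rw [hsphere, ← locdist, ← coeff_locdistEnum_X_one, locdistEnum_addChar, algebraMap_eq,
    univ_inter, ← compl_eq_univ_sdiff, card_compl, Fintype.card_fin, mul_assoc, coeff_C_mul,
    ← kraw_eq_coeff]
  simp [kraw, sum_range_succ, Nat.cast_sub hw]
  ring

lemma exists_addChar_expansion_of_eigen {h : ℕ} (f : (Fin n → Fin q) → ℂ)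
    (hf : ∀ α, ∑ β ∈ univ.filter (fun β => hammingDist α β = 1), f β
      = (((q : ℂ) - 1) * n - q * h) * f α) :
    ∃ c : AddChar (Fin n → Fin q) ℂ → ℂ,
      (∀ ψ, c ψ ≠ 0 → #ψ.coordSupport = h) ∧ f = ∑ ψ, c ψ • ⇑ψ := by
  set B := AddChar.complexBasis (Fin n → Fin q)
  set c := B.repr f
  have hf_eq : f = ∑ ψ, c ψ • ⇑ψ := by
    simpa only [B, AddChar.complexBasis_apply] using (B.sum_repr f).symm
  refine ⟨c, fun ψ hψ => ?_, hf_eq⟩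
  set eig : AddChar (Fin n → Fin q) ℂ → ℂ := fun ψ => ((q : ℂ) - 1) * n - q * #ψ.coordSupport
  have hf_apply (x : Fin n → Fin q) : f x = ∑ ψ, c ψ * ψ x := by
    conv_lhs => rw [hf_eq]
    simp only [Finset.sum_apply, Pi.smul_apply, smul_eq_mul]
  -- Each character is an eigenfunction, so applying the adjacency operator to the expansion of `f`
  -- multiplies the coefficient of `ψ` by `eig ψ`; compare coefficients with those of `λ f`.
  have hcoeff : ∑ ψ, (c ψ * eig ψ) • B ψ = ∑ ψ, ((((q : ℂ) - 1) * n - q * h) * c ψ) • B ψ := by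
    funext x
    simp only [B, AddChar.complexBasis_apply, Finset.sum_apply, Pi.smul_apply, smul_eq_mul]
    calc ∑ ψ, c ψ * eig ψ * ψ x
        = ∑ β ∈ univ.filter (fun β => hammingDist x β = 1), f β := by
          simp only [hf_apply, mul_assoc]
          rw [sum_comm]
          simp only [← mul_sum, sum_sphere_one_addChar, eig]
      _ = _ := by rw [hf x, hf_apply, mul_sum]; simp only [mul_assoc]
  have heig := congrFun (congrArg (⇑) (congrArg B.repr hcoeff)) ψ
  rw [B.repr_sum_self, B.repr_sum_self, mul_comm, mul_left_inj' hψ] at heig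
  have hq : (q : ℂ) ≠ 0 := Nat.cast_ne_zero.2 (NeZero.ne q)
  have hcard : (q : ℂ) * #ψ.coordSupport = q * h := by simp only [eig] at heig; linear_combination -heig
  exact_mod_cast mul_left_cancel₀ hq hcard

lemma pow_mul_locdistEnum_compl_eq_addChar {h k : ℕ} (hn : n ≤ h + k) (hkh : k ≤ h)
    (ψ : AddChar (Fin n → Fin q) ℂ) (hψ : #ψ.coordSupport = h) {I : Finset (Fin n)}
    (hI : #I = k) (α : Fin n → Fin q) :
    (1 + C ((q : ℂ) - 1) * X) ^ (h + k - n) * locdistEnum ψ α Iᶜ X 1 =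
      (1 - X) ^ (h - k) * locdistEnum ψ α I (-X) (1 + C (((q - 1 : ℕ) : ℂ) - 1) * X) := by
  have hq1 : ((q - 1 : ℕ) : ℂ) = q - 1 := by rw [Nat.cast_sub NeZero.one_le, Nat.cast_one]
  have hz_sub : 1 + C (((q - 1 : ℕ) : ℂ) - 1) * X - -X = 1 + C ((q : ℂ) - 1) * X := by
    rw [hq1]; simp only [C_sub, C_1]; ring
  have hz_add : 1 + C (((q - 1 : ℕ) : ℂ) - 1) * X + algebraMap ℂ ℂ[X] ((q : ℂ) - 1) * -X =
      1 - X := by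
    rw [hq1, algebraMap_eq]; simp only [C_sub, C_1]; ring
  rw [locdistEnum_addChar, locdistEnum_addChar, hz_sub, hz_add, algebraMap_eq]
  set S := ψ.coordSupport
  have hSI : Iᶜ ∩ S = S \ I := by rw [inter_comm, sdiff_eq_inter_compl]
  have hS : #(S \ I) + #(I ∩ S) = h := by rw [inter_comm, card_sdiff_add_card_inter, hψ]
  have hIc : #(Iᶜ \ S) + #(S \ I) = n - k := by
    rw [← hSI, card_sdiff_add_card_inter, card_compl, Fintype.card_fin, hI]
  have hI' : #(I \ S) + #(I ∩ S) = k := hI ▸ card_sdiff_add_card_inter I S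
  have hkn : k ≤ n := hI ▸ card_le_univ I |>.trans_eq (Fintype.card_fin n)
  have e1 : #(I ∩ S) = (h + k - n) + #(Iᶜ \ S) := by omega
  have e2 : #(S \ I) = (h - k) + #(I \ S) := by omega
  rw [hSI, e1, e2, pow_add, pow_add]
  ring

lemma pow_mul_locdistEnum_compl_eq_of_eigen {h k : ℕ} (hn : n ≤ h + k) (hkh : k ≤ h)
    (f : (Fin n → Fin q) → ℂ)
    (hf : ∀ α, ∑ β ∈ univ.filter (fun β => hammingDist α β = 1), f β
      = (((q : ℂ) - 1) * n - q * h) * f α)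
    {I : Finset (Fin n)} (hI : #I = k) (α : Fin n → Fin q) :
    (1 + C ((q : ℂ) - 1) * X) ^ (h + k - n) * locdistEnum f α Iᶜ X 1 =
      (1 - X) ^ (h - k) * locdistEnum f α I (-X) (1 + C (((q - 1 : ℕ) : ℂ) - 1) * X) := by
  obtain ⟨c, hc, rfl⟩ := exists_addChar_expansion_of_eigen f hf
  simp only [locdistEnum_sum_smul, mul_sum]
  refine sum_congr rfl fun ψ _ => ?_
  by_cases hψ : c ψ = 0
  · simp [hψ]
  · rw [mul_left_comm, pow_mul_locdistEnum_compl_eq_addChar hn hkh ψ (hc ψ hψ) hI, mul_left_comm]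

end Characters

theorem stmt9_general (q n h k : ℕ) (hq : 2 ≤ q) (hk1 : n - h < k) (hk2 : k ≤ h)
    (f : (Fin n → Fin q) → ℂ)
    (hf : ∀ α, ∑ β ∈ Finset.univ.filter (fun β => hammingDist α β = 1), f β
            = (((q:ℂ)-1)*n - q*h) * f α)
    (I : Finset (Fin n)) (hI : I.card = k)
    (α : Fin n → Fin q) (j : ℕ) :
    ∑ i ∈ Finset.range (j+1),
        ((q:ℂ)-1)^(j-i) * (((h+k-n).choose (j-i) : ℕ) : ℂ) * locdist f α Iᶜ i =
      ∑ i ∈ Finset.range (j+1),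
        (-1:ℂ)^i * (kraw (q-1) (j-i) (h-k) (h-i) : ℂ) * locdist f α I i := by
  have : NeZero q := ⟨by omega⟩
  rw [sum_pow_mul_choose_mul_locdist_eq_coeff, sum_kraw_mul_locdist_eq_coeff (q - 1) hk2 hI,
    pow_mul_locdistEnum_compl_eq_of_eigen (by omega) hk2 f hf hI]

/-- Case n−h < k ≤ h: the linear system relating the (Ī,α)- and (I,α)-local
distributions of a λ-eigenfunction. -/
theorem stmt9 (q n h k : ℕ) (hq : 2 ≤ q) (hh : h ≤ n) (hk1 : n - h < k) (hk2 : k ≤ h)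
    (f : (Fin n → Fin q) → ℂ)
    (hf : ∀ α, ∑ β ∈ Finset.univ.filter (fun β => hammingDist α β = 1), f β
            = (((q:ℂ)-1)*n - q*h) * f α)
    (I : Finset (Fin n)) (hI : I.card = k)
    (α : Fin n → Fin q) (j : ℕ) (hj : j ≤ n - k) :
    ∑ i ∈ Finset.range (j+1),
        ((q:ℂ)-1)^(j-i) * (((h+k-n).choose (j-i) : ℕ) : ℂ) * locdist f α Iᶜ i =
      ∑ i ∈ Finset.range (j+1),
        (-1:ℂ)^i * (kraw (q-1) (j-i) (h-k) (h-i) : ℂ) * locdist f α I i :=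
  stmt9_general q n h k hq hk1 hk2 f hf I hI α j
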